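/- arXiv:2403.03625 — 2 statements merged into one kernel-verified Lean document; each statement's English description precedes it below -/
import Mathlib

section
/- Let k ≥ 5 and 3 ≤ h ≤ k−1, and let A = {0 = a₀ < a₁ < ⋯ < a_{k−1}} be a set of k nonnegative integers. Let A_h = {a₀, a₁, …, a_h}. If |h^∧_± A_h| ≥ h(h+1) + 1 + t for some t ≥ 0, then |h^∧_± A| ≥ 2hk − h(h+1) + 1 + t. -/
open Finset

/-- The restricted `h`-fold signed sumset of a finite set `A` of integers:
all sums `∑ λᵢ aᵢ` with `λᵢ ∈ {-1,0,1}` and `∑ |λᵢ| = h`. -/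
def signedSumset (h : ℕ) (A : Finset ℤ) : Set ℤ :=
  {s | ∃ f : ℤ → ℤ, (∀ a, f a = -1 ∨ f a = 0 ∨ f a = 1) ∧ (∀ a ∉ A, f a = 0) ∧
    (∑ a ∈ A, |f a|) = (h : ℤ) ∧ s = ∑ a ∈ A, f a * a}

lemma sSS_chain_mono {f : ℕ → ℤ} {N : ℕ} (H : ∀ m, m + 1 < N → f m < f (m + 1)) :
    ∀ i j, i < j → j < N → f i < f j := by
  intro i j hij hjN
  induction j with
  | zero => omega
  | succ j ih =>
    rcases Nat.lt_or_ge i j with hc | hc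
    · exact (ih hc (by omega)).trans (H j hjN)
    · have : i = j := by omega
      subst this; exact H i hjN

lemma sSS_mem_of_subset {h : ℕ} {A B : Finset ℤ} (hBA : B ⊆ A) (hcard : B.card = h) :
    (∑ x ∈ B, x) ∈ signedSumset h A := by
  refine ⟨fun x => if x ∈ B then 1 else 0, ?_, ?_, ?_, ?_⟩
  · intro x; by_cases hx : x ∈ B <;> simp [hx]
  · intro x hx
    have : x ∉ B := fun hxB => hx (hBA hxB)
    simp [this]
  · have : ∀ x ∈ A, |if x ∈ B then (1:ℤ) else 0| = (if x ∈ B then (1:ℤ) else 0) := by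
      intro x _; by_cases hx : x ∈ B <;> simp [hx]
    rw [Finset.sum_congr rfl this, Finset.sum_ite_mem,
      Finset.inter_eq_right.mpr hBA]
    simp [hcard]
  · have : ∀ x ∈ A, (if x ∈ B then (1:ℤ) else 0) * x = (if x ∈ B then x else 0) := by
      intro x _; by_cases hx : x ∈ B <;> simp [hx]
    rw [Finset.sum_congr rfl this, Finset.sum_ite_mem, Finset.inter_eq_right.mpr hBA]

lemma sSS_neg_mem {h : ℕ} {A : Finset ℤ} {s : ℤ} (hs : s ∈ signedSumset h A) :
    -s ∈ signedSumset h A := by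
  obtain ⟨f, h1, h2, h3, h4⟩ := hs
  refine ⟨fun x => -f x, ?_, fun x hx => by simp [h2 x hx], ?_, ?_⟩
  · intro x; rcases h1 x with hc | hc | hc <;> simp [hc]
  · simpa [abs_neg] using h3
  · rw [h4]; rw [← Finset.sum_neg_distrib]; exact Finset.sum_congr rfl fun x _ => by ring

lemma sSS_abs_le {h : ℕ} {A : Finset ℤ} {s : ℤ} (hs : s ∈ signedSumset h A) :
    |s| ≤ ∑ x ∈ A, |x| := by
  obtain ⟨f, h1, h2, h3, h4⟩ := hs
  rw [h4]
  calc |∑ x ∈ A, f x * x| ≤ ∑ x ∈ A, |f x * x| := Finset.abs_sum_le_sum_abs _ _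
    _ ≤ ∑ x ∈ A, |x| := by
        refine Finset.sum_le_sum fun x _ => ?_
        rw [abs_mul]
        rcases h1 x with hc | hc | hc <;> simp [hc, abs_nonneg]

lemma sSS_finite (h : ℕ) (A : Finset ℤ) : (signedSumset h A).Finite := by
  refine (Set.finite_Icc (-(∑ x ∈ A, |x|)) (∑ x ∈ A, |x|)).subset ?_
  intro s hs
  exact Set.mem_Icc.mpr (abs_le.mp (sSS_abs_le hs))

lemma sSS_mono {h : ℕ} {A B : Finset ℤ} (hAB : A ⊆ B) :
    signedSumset h A ⊆ signedSumset h B := by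
  rintro s ⟨f, h1, h2, h3, h4⟩
  refine ⟨f, h1, fun x hx => h2 x fun hxA => hx (hAB hxA), ?_, ?_⟩
  · rw [← h3]
    refine (Finset.sum_subset (f := fun x => |f x|) hAB fun x _ hxA => ?_).symm
    show |f x| = 0
    rw [h2 x hxA]; simp
  · rw [h4]
    refine Finset.sum_subset (f := fun x => f x * x) hAB fun x _ hxA => ?_
    show f x * x = 0
    rw [h2 x hxA]; ring

theorem stmt3 (h k t : ℕ) (hk : 5 ≤ k) (hh : 3 ≤ h) (hhk : h ≤ k - 1)
    (a : ℕ → ℤ) (h0 : a 0 = 0)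
    (hmono : ∀ i ∈ Finset.range k, ∀ j ∈ Finset.range k, i < j → a i < a j)
    (hsub : h * (h + 1) + 1 + t ≤
      (signedSumset h ((Finset.range (h + 1)).image a)).ncard) :
    2 * h * k - h * (h + 1) + 1 + t ≤
      (signedSumset h ((Finset.range k).image a)).ncard := by
  have hk1 : h + 1 ≤ k := by omega
  set A : Finset ℤ := (Finset.range k).image a with hA
  set T := signedSumset h A with hT
  have hlt : ∀ i j : ℕ, i < j → j < k → a i < a j := fun i j hij hjk =>
    hmono i (Finset.mem_range.mpr (lt_trans hij hjk)) j (Finset.mem_range.mpr hjk) hij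
  have hinj : ∀ i < k, ∀ j < k, a i = a j → i = j := by
    intro i hi j hj hij
    by_contra hne
    rcases Nat.lt_or_ge i j with hc | hc
    · exact absurd hij (ne_of_lt (hlt i j hc hj))
    · have hc2 : j < i := by omega
      exact absurd hij.symm (ne_of_lt (hlt j i hc2 hi))
  have hnn : ∀ i < k, 0 ≤ a i := by
    intro i hi
    rcases Nat.eq_zero_or_pos i with rfl | hp
    · simp [h0]
    · have := hlt 0 i hp hi; omega
  set q := k - 1 - h with hq
  set n := h * q with hn
  set M : ℤ := ∑ i ∈ Finset.range (h + 1), a i with hM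
  set v : ℕ → ℕ → ℤ := fun p s =>
    (∑ i ∈ Finset.Ico 1 p, a i) + a (p + s) + ∑ i ∈ Finset.Ico (k - h + p) k, a i with hv
  -- membership of index-set sums
  have hmemS : ∀ S : Finset ℕ, S ⊆ Finset.range k → S.card = h → (∑ i ∈ S, a i) ∈ T := by
    intro S hSk hScard
    have hinjS : ∀ x ∈ S, ∀ y ∈ S, a x = a y → x = y := fun x hx y hy =>
      hinj x (Finset.mem_range.mp (hSk hx)) y (Finset.mem_range.mp (hSk hy))
    have hsum : ∑ x ∈ S.image a, x = ∑ i ∈ S, a i := Finset.sum_image hinjS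
    have hcard : (S.image a).card = h := by
      rw [Finset.card_image_of_injOn hinjS, hScard]
    rw [← hsum]
    exact sSS_mem_of_subset (Finset.image_subset_image hSk) hcard
  -- membership of v values
  have hvmem : ∀ p s : ℕ, 1 ≤ p → p ≤ h → 1 ≤ s → s ≤ q → v p s ∈ T := by
    intro p s hp1 hph hs1 hsq
    have hps : p + s < k - h + p := by omega
    have hkp : k - h + p ≤ k := by omega
    set S : Finset ℕ := (Finset.Ico 1 p ∪ {p + s}) ∪ Finset.Ico (k - h + p) k with hS
    have hd1 : Disjoint (Finset.Ico 1 p) ({p + s} : Finset ℕ) := by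
      simp only [Finset.disjoint_singleton_right, Finset.mem_Ico]
      omega
    have hd2 : Disjoint (Finset.Ico 1 p ∪ {p + s}) (Finset.Ico (k - h + p) k) := by
      rw [Finset.disjoint_left]
      intro x hx hx2
      simp only [Finset.mem_union, Finset.mem_Ico, Finset.mem_singleton] at hx hx2
      omega
    have hsumS : ∑ i ∈ S, a i = v p s := by
      rw [hS, Finset.sum_union hd2, Finset.sum_union hd1, Finset.sum_singleton]
    have hcardS : S.card = h := by
      rw [hS, Finset.card_union_of_disjoint hd2, Finset.card_union_of_disjoint hd1]
      rw [Nat.card_Ico, Nat.card_Ico, Finset.card_singleton]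
      omega
    have hsubS : S ⊆ Finset.range k := by
      intro x hx
      simp only [hS, Finset.mem_union, Finset.mem_Ico, Finset.mem_singleton] at hx
      simp only [Finset.mem_range]
      omega
    rw [← hsumS]; exact hmemS S hsubS hcardS
  -- step within a block
  have hv1 : ∀ p s : ℕ, 1 ≤ p → p ≤ h → 1 ≤ s → s + 1 ≤ q → v p s < v p (s + 1) := by
    intro p s hp1 hph hs1 hsq
    have hstep : a (p + s) < a (p + s + 1) := hlt _ _ (by omega) (by omega)
    simp only [hv]
    have e : p + (s + 1) = p + s + 1 := by omega
    rw [e]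
    linarith
  -- step between blocks
  have hv2 : ∀ p : ℕ, 1 ≤ p → p + 1 ≤ h → 1 ≤ q → v (p + 1) q < v p 1 := by
    intro p hp1 hph hq1
    have e1 : ∑ i ∈ Finset.Ico 1 (p + 1), a i = (∑ i ∈ Finset.Ico 1 p, a i) + a p :=
      Finset.sum_Ico_succ_top hp1 a
    have e2 : ∑ i ∈ Finset.Ico (k - h + p) k, a i
        = a (k - h + p) + ∑ i ∈ Finset.Ico (k - h + p + 1) k, a i :=
      Finset.sum_eq_sum_Ico_succ_bot (by omega) a
    have e3 : p + 1 + q = k - h + p := by omega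
    have e4 : k - h + (p + 1) = k - h + p + 1 := by omega
    have hstep : a p < a (p + 1) := hlt _ _ (by omega) (by omega)
    simp only [hv]
    rw [e1, e3, e4, e2]
    linarith
  set g : ℕ → ℤ := fun m => v (h - m / q) (m % q + 1) with hg
  have hstep : ∀ m, m + 1 < n → g m < g (m + 1) := by
    intro m hmn
    have hq0 : 0 < q := by
      rcases Nat.eq_zero_or_pos q with he | hp
      · rw [he, Nat.mul_zero] at hn; omega
      · exact hp
    have hm := Nat.div_add_mod m q
    have hsq : m % q < q := Nat.mod_lt _ hq0
    have hrh : m / q < h :=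
      Nat.div_lt_iff_lt_mul hq0 |>.mpr (by rw [hn] at hmn; omega)
    obtain ⟨r, hdr⟩ : ∃ r, m / q = r := ⟨_, rfl⟩
    obtain ⟨s, hds⟩ : ∃ s, m % q = s := ⟨_, rfl⟩
    rw [hdr] at hm hrh
    rw [hds] at hm hsq
    rcases Nat.lt_or_ge (s + 1) q with hcase | hcase
    · -- same block
      have e : m + 1 = q * r + (s + 1) := by rw [← Nat.add_assoc, hm]
      have ed : (m + 1) / q = r := by
        rw [e, Nat.mul_add_div hq0, Nat.div_eq_of_lt hcase, Nat.add_zero]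
      have em : (m + 1) % q = s + 1 := by
        rw [e, Nat.mul_add_mod, Nat.mod_eq_of_lt hcase]
      show v (h - m / q) (m % q + 1) < v (h - (m + 1) / q) ((m + 1) % q + 1)
      rw [ed, em, hdr, hds]
      exact hv1 (h - r) (s + 1) (by omega) (by omega) (by omega) (by omega)
    · -- new block
      have hseq : s + 1 = q := by omega
      have e : m + 1 = q * (r + 1) := by
        have e2 : q * (r + 1) = q * r + q := Nat.mul_succ q r
        omega
      have ed : (m + 1) / q = r + 1 := by
        rw [e, Nat.mul_div_cancel_left _ hq0]
      have em : (m + 1) % q = 0 := by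
        rw [e, Nat.mul_mod_right]
      have hr1h : r + 1 < h := by
        have : q * (r + 1) < q * h := by
          rw [← e]
          calc m + 1 < n := hmn
            _ = q * h := by rw [hn, Nat.mul_comm]
        exact Nat.lt_of_mul_lt_mul_left this
      show v (h - m / q) (m % q + 1) < v (h - (m + 1) / q) ((m + 1) % q + 1)
      rw [ed, em, hdr, hds, hseq]
      have e5 : h - r = (h - (r + 1)) + 1 := by omega
      rw [e5]
      exact hv2 (h - (r + 1)) (by omega) (by omega) hq0
  have hchain : ∀ i j, i < j → j < n → g i < g j := sSS_chain_mono hstep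
  have hMeq : M = (∑ i ∈ Finset.Ico 1 h, a i) + a h := by
    rw [hM, Finset.range_eq_Ico, Finset.sum_eq_sum_Ico_succ_bot (by omega) a,
      Finset.sum_Ico_succ_top (by omega) a, h0]
    ring
  have hg0 : 0 < q → M < g 0 := by
    intro hq0
    have e0 : g 0 = v h 1 := by
      rw [hg]
      simp [Nat.zero_div, Nat.zero_mod]
    rw [e0]
    have ekk : k - h + h = k := by omega
    have hstep2 : a h < a (h + 1) := hlt _ _ (by omega) (by omega)
    simp only [hv]
    rw [ekk, Finset.Ico_self, Finset.sum_empty, hMeq]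
    linarith
  have hgM : ∀ m < n, M < g m := by
    intro m hmn
    have hq0 : 0 < q := by
      rcases Nat.eq_zero_or_pos q with he | hp
      · rw [he, Nat.mul_zero] at hn; omega
      · exact hp
    rcases Nat.eq_zero_or_pos m with rfl | hp
    · exact hg0 hq0
    · exact (hg0 hq0).trans (hchain 0 m hp hmn)
  have hgmem : ∀ m < n, g m ∈ T := by
    intro m hmn
    have hq0 : 0 < q := by
      rcases Nat.eq_zero_or_pos q with he | hp
      · rw [he, Nat.mul_zero] at hn; omega
      · exact hp
    have hrh : m / q < h := Nat.div_lt_iff_lt_mul hq0 |>.mpr (by rw [hn] at hmn; omega)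
    have hsq : m % q < q := Nat.mod_lt _ hq0
    obtain ⟨r, hdr⟩ : ∃ r, m / q = r := ⟨_, rfl⟩
    obtain ⟨s, hds⟩ : ∃ s, m % q = s := ⟨_, rfl⟩
    rw [hdr] at hrh
    rw [hds] at hsq
    show v (h - m / q) (m % q + 1) ∈ T
    rw [hdr, hds]
    exact hvmem (h - r) (s + 1) (by omega) (by omega) (by omega) (by omega)
  -- the finsets of new elements
  set F1 : Finset ℤ := (Finset.range n).image g with hF1
  set F2 : Finset ℤ := (Finset.range n).image (fun m => -(g m)) with hF2
  have hginj : ∀ i ∈ Finset.range n, ∀ j ∈ Finset.range n, g i = g j → i = j := by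
    intro i hi j hj hij
    by_contra hne
    rcases Nat.lt_or_ge i j with hc | hc
    · exact absurd hij (ne_of_lt (hchain i j hc (Finset.mem_range.mp hj)))
    · have hc2 : j < i := by omega
      exact absurd hij.symm (ne_of_lt (hchain j i hc2 (Finset.mem_range.mp hi)))
  have hF1card : F1.card = n := by
    rw [hF1, Finset.card_image_of_injOn hginj, Finset.card_range]
  have hF2card : F2.card = n := by
    rw [hF2, Finset.card_image_of_injOn (fun i hi j hj hij => hginj i hi j hj (by linarith)),
      Finset.card_range]
  have hM0 : 0 ≤ M := by
    rw [hM]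
    exact Finset.sum_nonneg fun i hi => hnn i (by have := Finset.mem_range.mp hi; omega)
  have hF1pos : ∀ x ∈ F1, M < x := by
    intro x hx
    rw [hF1] at hx
    obtain ⟨m, hm, rfl⟩ := Finset.mem_image.mp hx
    exact hgM m (Finset.mem_range.mp hm)
  have hF2neg : ∀ x ∈ F2, x < -M := by
    intro x hx
    rw [hF2] at hx
    obtain ⟨m, hm, rfl⟩ := Finset.mem_image.mp hx
    have := hgM m (Finset.mem_range.mp hm)
    linarith
  have hd12 : Disjoint F1 F2 := by
    rw [Finset.disjoint_left]
    intro x hx1 hx2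
    have := hF1pos x hx1
    have := hF2neg x hx2
    linarith
  set S0 := signedSumset h ((Finset.range (h + 1)).image a) with hS0def
  have hS0M : ∀ x ∈ S0, |x| ≤ M := by
    intro x hx
    have hb := sSS_abs_le hx
    have heq : ∑ y ∈ (Finset.range (h + 1)).image a, |y| = M := by
      rw [Finset.sum_image (fun i hi j hj hij => hinj i (by have := Finset.mem_range.mp hi; omega)
        j (by have := Finset.mem_range.mp hj; omega) hij), hM]
      exact Finset.sum_congr rfl fun i hi =>
        abs_of_nonneg (hnn i (by have := Finset.mem_range.mp hi; omega))
    rwa [heq] at hb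
  have hS0T : S0 ⊆ T :=
    sSS_mono (Finset.image_subset_image (Finset.range_subset_range.mpr hk1))
  have hFT : (↑(F1 ∪ F2) : Set ℤ) ⊆ T := by
    intro x hx
    rw [Finset.coe_union] at hx
    rcases hx with hx | hx
    · rw [hF1] at hx
      obtain ⟨m, hm, rfl⟩ := Finset.mem_coe.mp hx |> Finset.mem_image.mp
      exact hgmem m (Finset.mem_range.mp hm)
    · rw [hF2] at hx
      obtain ⟨m, hm, rfl⟩ := Finset.mem_coe.mp hx |> Finset.mem_image.mp
      exact sSS_neg_mem (hgmem m (Finset.mem_range.mp hm))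
  have hdisj : Disjoint S0 (↑(F1 ∪ F2) : Set ℤ) := by
    rw [Set.disjoint_left]
    intro x hx1 hx2
    have hb := hS0M x hx1
    rw [Finset.coe_union] at hx2
    rcases hx2 with hx2 | hx2
    · have := hF1pos x (Finset.mem_coe.mp hx2)
      have := le_abs_self x
      linarith
    · have := hF2neg x (Finset.mem_coe.mp hx2)
      have := neg_abs_le x
      linarith
  have hUT : S0 ∪ (↑(F1 ∪ F2) : Set ℤ) ⊆ T := Set.union_subset hS0T hFT
  have hS0fin : S0.Finite := sSS_finite h _
  have hTfin : T.Finite := sSS_finite h _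
  have hUcard : (S0 ∪ (↑(F1 ∪ F2) : Set ℤ)).ncard = S0.ncard + (n + n) := by
    rw [Set.ncard_union_eq hdisj hS0fin (Finset.finite_toSet _), Set.ncard_coe_finset,
      Finset.card_union_of_disjoint hd12, hF1card, hF2card]
  have hmain : S0.ncard + (n + n) ≤ T.ncard := by
    rw [← hUcard]
    exact Set.ncard_le_ncard hUT hTfin
  -- final arithmetic
  obtain ⟨q', hk'⟩ : ∃ q', k = h + 1 + q' := ⟨k - h - 1, by omega⟩
  have hqq : q = q' := by omega
  have e2 : 2 * h * k = h * (h + 1) + (h * (h + 1) + (n + n)) := by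
    rw [hn, hqq, hk']; ring
  rw [e2, Nat.add_sub_cancel_left]
  have : h * (h + 1) + 1 + t ≤ S0.ncard := hsub
  linarith
end

section
/- Let h and k be integers with 4 ≤ h ≤ k−1. If A is an arithmetic progression of k nonnegative integers with 0 ∈ A, then |h^∧_± A| = 2hk − h(h+1) + 1. -/
open Finset

/-!
Multiplying by `d` reduces the problem to `A = {0, …, k-1}`. A signed sum of `h` distinct elements
of this set has absolute value at most `M = (k-1) + (k-2) + ⋯ + (k-h)`, the sum of its `h` largest
elements. Conversely every `t` with `|t| ≤ M` is such a sum, by induction on `h ≥ 3`: for `h = 3`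
explicit triples suffice, and in the step one uses the largest element `k-1` with the sign of `t`
and writes `t ∓ (k-1)` with `h-1` elements of `{0, …, k-2}`. So the sumset is `d • [-M, M]`, of
size `2M + 1 = 2hk - h(h+1) + 1`.
-/

section SignedSumset

variable {h : ℕ} {A B : Finset ℤ} {s : ℤ}

lemma zero_mem_signedSumset_zero : (0 : ℤ) ∈ signedSumset 0 A :=
  ⟨0, by simp⟩

lemma neg_mem_signedSumset (hs : s ∈ signedSumset h A) : -s ∈ signedSumset h A := by
  obtain ⟨f, hf, hfA, hcard, rfl⟩ := hs
  refine ⟨-f, fun a => ?_, fun a ha => by simp [hfA a ha], by simpa using hcard, by simp⟩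
  rcases hf a with h | h | h <;> simp [h]

lemma signedSumset_mono (hAB : A ⊆ B) : signedSumset h A ⊆ signedSumset h B := by
  rintro s ⟨f, hf, hfA, hcard, rfl⟩
  have hzero : ∀ b ∈ B, b ∉ A → f b = 0 := fun b _ hb => hfA b hb
  refine ⟨f, hf, fun b hb => hfA b (fun hbA => hb (hAB hbA)), ?_, ?_⟩
  · rwa [← sum_subset hAB (by simp +contextual [hzero])]
  · exact sum_subset hAB (by simp +contextual [hzero])

lemma add_mul_mem_signedSumset_insert {a ε : ℤ} (ha : a ∉ A) (hε : |ε| = 1)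
    (hs : s ∈ signedSumset h A) : s + ε * a ∈ signedSumset (h + 1) (insert a A) := by
  obtain ⟨f, hf, hfA, hcard, rfl⟩ := hs
  have hε' : ε = 1 ∨ ε = -1 := abs_eq zero_le_one |>.mp hε
  have hupd : ∀ b ∈ A, Function.update f a ε b = f b := fun b hb =>
    Function.update_of_ne (ne_of_mem_of_not_mem hb ha) _ _
  refine ⟨Function.update f a ε, fun b => ?_, fun b hb => ?_, ?_, ?_⟩
  · rcases eq_or_ne b a with rfl | hb
    · simp only [Function.update_self]; tauto
    · simpa [hb] using hf b
  · rw [mem_insert, not_or] at hb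
    simp [hb.1, hfA b hb.2]
  · have hsumA : ∑ b ∈ A, |Function.update f a ε b| = ∑ b ∈ A, |f b| :=
      sum_congr rfl fun b hb => by rw [hupd b hb]
    rw [sum_insert ha, hsumA, hcard, Function.update_self, hε]
    push_cast; ring
  · have hsumA : ∑ b ∈ A, Function.update f a ε b * b = ∑ b ∈ A, f b * b :=
      sum_congr rfl fun b hb => by rw [hupd b hb]
    rw [sum_insert ha, hsumA, Function.update_self, add_comm]

lemma exists_subset_abs_le_of_mem_signedSumset (hs : s ∈ signedSumset h A) :
    ∃ T ⊆ A, #T = h ∧ |s| ≤ ∑ a ∈ T, |a| := by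
  obtain ⟨f, hf, -, hcard, rfl⟩ := hs
  set T := A.filter (f · ≠ 0)
  have habs : ∀ a ∈ T, |f a| = 1 := fun a ha => by
    have := (mem_filter.1 ha).2
    rcases hf a with h | h | h <;> simp_all
  refine ⟨T, filter_subset _ _, ?_, ?_⟩
  · have hsumT : ∑ a ∈ T, |f a| = ∑ a ∈ A, |f a| :=
      sum_filter_of_ne fun a _ ha => by simpa using ha
    rw [sum_congr rfl habs, sum_const, nsmul_eq_mul, mul_one] at hsumT
    exact_mod_cast hsumT.trans hcard
  · have hsumT : ∑ a ∈ T, f a * a = ∑ a ∈ A, f a * a :=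
      sum_filter_of_ne fun a _ ha => left_ne_zero_of_mul ha
    calc |∑ a ∈ A, f a * a| = |∑ a ∈ T, f a * a| := by rw [hsumT]
      _ ≤ ∑ a ∈ T, |f a * a| := abs_sum_le_sum_abs _ _
      _ = ∑ a ∈ T, |a| := sum_congr rfl fun a ha => by rw [abs_mul, habs a ha, one_mul]

lemma signedSumset_image_mul_right {d : ℤ} (hd : d ≠ 0) :
    signedSumset h (A.image (· * d)) = (· * d) '' signedSumset h A := by
  have hinj : Set.InjOn (· * d) A := (mul_left_injective₀ hd).injOn
  have hmem : ∀ a, a * d ∈ A.image (· * d) ↔ a ∈ A := fun a =>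
    (mul_left_injective₀ hd).mem_finset_image
  ext s
  constructor
  · rintro ⟨f, hf, hfA, hcard, rfl⟩
    refine ⟨∑ a ∈ A, f (a * d) * a,
      ⟨fun a => f (a * d), fun a => hf _, fun a ha => hfA _ ((hmem a).not.2 ha), ?_, rfl⟩, ?_⟩
    · rwa [sum_image hinj] at hcard
    · simp only [sum_image hinj, sum_mul, mul_assoc]
  · rintro ⟨t, ⟨g, hg, hgA, hcard, rfl⟩, rfl⟩
    have hdiv : ∀ a, (if d ∣ a * d then g (a * d / d) else 0) = g a := fun a => by
      simp [Int.mul_ediv_cancel _ hd]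
    refine ⟨fun b => if d ∣ b then g (b / d) else 0, fun b => ?_, fun b hb => ?_, ?_, ?_⟩
    · dsimp only
      split_ifs
      exacts [hg _, by simp]
    · dsimp only
      split_ifs with hdb
      · obtain ⟨c, rfl⟩ := hdb
        rw [mul_comm, hmem] at hb
        rw [Int.mul_ediv_cancel_left _ hd, hgA c hb]
      · rfl
    · simpa only [sum_image hinj, hdiv] using hcard
    · simp only [sum_image hinj, hdiv, sum_mul, mul_assoc]

end SignedSumset

def sumLargest (k h : ℕ) : ℤ := ∑ i ∈ range h, ((k : ℤ) - 1 - i)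

lemma two_mul_sumLargest (k h : ℕ) : 2 * sumLargest k h = h * (2 * k - h - 1) := by
  induction h with
  | zero => simp [sumLargest]
  | succ h ih =>
    rw [sumLargest, sum_range_succ, ← sumLargest, mul_add, ih]
    push_cast; ring

lemma sumLargest_succ_succ (k h : ℕ) : sumLargest (k + 1) (h + 1) = k + sumLargest k h := by
  have := two_mul_sumLargest (k + 1) (h + 1)
  have := two_mul_sumLargest k h
  push_cast at *
  linarith

lemma sumLargest_le_sumLargest_succ (k h : ℕ) : sumLargest k h ≤ sumLargest (k + 1) h :=
  sum_le_sum fun i _ => by push_cast; omega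

lemma le_sumLargest {k h : ℕ} (hh : 2 ≤ h) (hk : h < k) : (k : ℤ) ≤ sumLargest k h := by
  have := two_mul_sumLargest k h
  have hh' : (2 : ℤ) ≤ h := by exact_mod_cast hh
  have hk' : (h : ℤ) + 1 ≤ k := by exact_mod_cast hk
  nlinarith

lemma sum_le_sumLargest (k : ℕ) {s : Finset ℤ} (hs : s ⊆ Ico 0 (k : ℤ)) :
    ∑ a ∈ s, a ≤ sumLargest k #s := by
  induction k generalizing s with
  | zero => simp [subset_empty.1 (by simpa using hs), sumLargest]
  | succ k ih =>
    by_cases hk : (k : ℤ) ∈ s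
    · have herase : s.erase (k : ℤ) ⊆ Ico 0 (k : ℤ) := fun a ha => by
        have := hs (mem_of_mem_erase ha)
        have := ne_of_mem_erase ha
        simp only [mem_Ico] at *
        omega
      rw [← add_sum_erase s _ hk, ← card_erase_add_one hk, sumLargest_succ_succ]
      exact add_le_add_right (ih herase) _
    · have hs' : s ⊆ Ico 0 (k : ℤ) := fun a ha => by
        have := hs ha
        have : a ≠ k := ne_of_mem_of_not_mem ha hk
        simp only [mem_Ico] at *
        omega
      exact (ih hs').trans (sumLargest_le_sumLargest_succ k _)

lemma abs_le_sumLargest_of_mem_signedSumset {h k : ℕ} {s : ℤ}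
    (hs : s ∈ signedSumset h (Ico 0 (k : ℤ))) : |s| ≤ sumLargest k h := by
  obtain ⟨T, hT, rfl, hsT⟩ := exists_subset_abs_le_of_mem_signedSumset hs
  have habs : ∑ a ∈ T, |a| = ∑ a ∈ T, a :=
    sum_congr rfl fun a ha => abs_of_nonneg (mem_Ico.1 (hT ha)).1
  exact hsT.trans (habs ▸ sum_le_sumLargest k hT)

lemma mem_signedSumset_three {A : Finset ℤ} {a b c x y z : ℤ} (ha : a ∈ A) (hb : b ∈ A)
    (hc : c ∈ A) (hab : a ≠ b) (hac : a ≠ c) (hbc : b ≠ c) (hx : |x| = 1) (hy : |y| = 1)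
    (hz : |z| = 1) : x * a + y * b + z * c ∈ signedSumset 3 A := by
  have h1 := add_mul_mem_signedSumset_insert (notMem_empty a) hx zero_mem_signedSumset_zero
  have h2 := add_mul_mem_signedSumset_insert (a := b) (by simpa using hab.symm) hy h1
  have h3 := add_mul_mem_signedSumset_insert (a := c) (by simp [hac.symm, hbc.symm]) hz h2
  simp only [zero_add] at h3
  refine signedSumset_mono ?_ h3
  simp only [insert_subset_iff, empty_subset, and_true]
  exact ⟨hc, hb, ha⟩

lemma mem_signedSumset_three_Ico_of_nonneg {k : ℕ} (hk : 4 ≤ k) {t : ℤ} (ht₀ : 0 ≤ t)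
    (ht : t ≤ 3 * k - 6) : t ∈ signedSumset 3 (Ico 0 (k : ℤ)) := by
  have key : ∀ a b c x y z : ℤ, 0 ≤ a ∧ a < b ∧ b < c ∧ c < k → |x| = 1 → |y| = 1 → |z| = 1 →
      x * a + y * b + z * c = t → t ∈ signedSumset 3 (Ico 0 (k : ℤ)) := by
    rintro a b c x y z ⟨ha, hab, hbc, hc⟩ hx hy hz rfl
    exact mem_signedSumset_three (mem_Ico.2 ⟨by omega, by omega⟩)
      (mem_Ico.2 ⟨by omega, by omega⟩) (mem_Ico.2 ⟨by omega, by omega⟩)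
      hab.ne (hab.trans hbc).ne hbc.ne hx hy hz
  have one : |(1 : ℤ)| = 1 := abs_one
  have neg_one : |(-1 : ℤ)| = 1 := by norm_num
  rcases ht₀.eq_or_lt with rfl | ht₁
  · exact key 1 2 3 1 1 (-1) (by omega) one one neg_one (by ring)
  rcases le_or_gt t (k - 2) with ht₂ | ht₂
  · exact key 0 1 (t + 1) 1 (-1) 1 (by omega) one neg_one one (by ring)
  rcases le_or_gt t k with ht₃ | ht₃
  · exact key 0 1 (t - 1) 1 1 1 (by omega) one one one (by ring)
  rcases le_or_gt t (2 * k - 3) with ht₄ | ht₄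
  · exact key 0 (t - k + 1) (k - 1) 1 1 1 (by omega) one one one (by ring)
  · exact key (t - 2 * k + 3) (k - 2) (k - 1) 1 1 1 (by omega) one one one (by ring)

lemma mem_signedSumset_Ico_of_abs_le {h k : ℕ} (hh : 3 ≤ h) (hk : h < k) {t : ℤ}
    (ht : |t| ≤ sumLargest k h) : t ∈ signedSumset h (Ico 0 (k : ℤ)) := by
  induction h, hh using Nat.le_induction generalizing k t with
  | base =>
    have h3 : sumLargest k 3 = 3 * k - 6 := by
      simp [sumLargest, sum_range_succ]; ring
    rcases le_total 0 t with ht₀ | ht₀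
    · exact mem_signedSumset_three_Ico_of_nonneg hk ht₀ (h3 ▸ (le_abs_self t).trans ht)
    · have hneg := mem_signedSumset_three_Ico_of_nonneg hk (neg_nonneg.2 ht₀)
        (h3 ▸ (neg_le_abs t).trans ht)
      simpa using neg_mem_signedSumset hneg
  | succ h hh ih =>
    obtain ⟨m, rfl⟩ : ∃ m, k = m + 1 := ⟨k - 1, by omega⟩
    rw [sumLargest_succ_succ] at ht
    have hm := le_sumLargest (by omega : 2 ≤ h) (by omega : h < m)
    obtain ⟨ε, hε, hrest⟩ : ∃ ε : ℤ, |ε| = 1 ∧ |t - ε * m| ≤ sumLargest m h := by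
      rw [abs_le] at ht
      rcases le_total 0 t with ht₀ | ht₀
      · exact ⟨1, abs_one, abs_le.2 ⟨by linarith, by linarith⟩⟩
      · exact ⟨-1, by norm_num, abs_le.2 ⟨by linarith, by linarith⟩⟩
    have := add_mul_mem_signedSumset_insert (a := m) (by simp) hε (ih (by omega) hrest)
    rwa [sub_add_cancel, insert_Ico_right_eq_Ico_add_one (Nat.cast_nonneg _), ← Nat.cast_succ]
      at this

theorem signedSumset_Ico {h k : ℕ} (hh : 3 ≤ h) (hk : h < k) :
    signedSumset h (Ico 0 (k : ℤ)) = Set.Icc (-sumLargest k h) (sumLargest k h) := by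
  ext t
  rw [Set.mem_Icc, ← abs_le]
  exact ⟨abs_le_sumLargest_of_mem_signedSumset, mem_signedSumset_Ico_of_abs_le hh hk⟩

lemma image_natCast_range (k : ℕ) : (range k).image (Nat.cast : ℕ → ℤ) = Ico 0 (k : ℤ) := by
  ext a
  simp only [mem_image, mem_range, mem_Ico]
  constructor
  · rintro ⟨i, hi, rfl⟩
    omega
  · exact fun ha => ⟨a.toNat, by omega, by omega⟩

theorem stmt7_general (h k : ℕ) (hh : 4 ≤ h) (hhk : h ≤ k - 1)
    (d : ℤ) (hd : 0 < d)
    (A : Finset ℤ) (hA : A = (Finset.range k).image (fun i : ℕ => (i : ℤ) * d)) :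
    (signedSumset h A).ncard = 2 * h * k - h * (h + 1) + 1 := by
  have hA' : A = (Ico 0 (k : ℤ)).image (· * d) := by
    rw [hA, ← image_natCast_range, image_image]
    rfl
  rw [hA', signedSumset_image_mul_right hd.ne', signedSumset_Ico (by omega) (by omega),
    Set.ncard_image_of_injective _ (mul_left_injective₀ hd.ne'), ← coe_Icc, Set.ncard_coe_finset,
    Int.card_Icc]
  have hle : h * (h + 1) ≤ 2 * h * k :=
    calc h * (h + 1) ≤ h * k := Nat.mul_le_mul_left h (by omega)
      _ ≤ 2 * h * k := by rw [mul_assoc]; omega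
  have hsum : 2 * sumLargest k h = ((2 * h * k - h * (h + 1) : ℕ) : ℤ) := by
    rw [two_mul_sumLargest, Nat.cast_sub hle]
    push_cast; ring
  omega

theorem stmt7 (h k : ℕ) (hh : 4 ≤ h) (hhk : h ≤ k - 1) (hk : 5 ≤ k)
    (d : ℤ) (hd : 0 < d)
    (A : Finset ℤ) (hA : A = (Finset.range k).image (fun i : ℕ => (i : ℤ) * d)) :
    (signedSumset h A).ncard = 2 * h * k - h * (h + 1) + 1 :=
  stmt7_general h k hh hhk d hd A hA
end
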